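/- arXiv:1107.1019 — 4 statements merged into one kernel-verified Lean document; each statement's English description precedes it below -/
import Mathlib

section
/- Let B be a unital C*-algebra and β : B → B an injective *-endomorphism whose range is the corner β(1)Bβ(1). Then the map K : B → B defined by K(b) = β⁻¹(β(1)·b·β(1)) is a positive linear map of norm at most 1 satisfying K(β(b)c) = b·K(c) for all b, c ∈ B (i.e. K is a transfer operator for β). -/
/-- Let `B` be a unital C*-algebra and `β : B → B` an injective
*-endomorphism whose range is the corner `β(1) B β(1)`.  Then the map `K` defined by
`K b = β⁻¹ (β 1 * b * β 1)` (formalized here as any function `K` satisfying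
`β (K b) = β 1 * b * β 1`, which determines `K` uniquely by injectivity of `β`) is a
positive linear map of norm at most one satisfying the transfer-operator identity
`K (β b * c) = b * K c`. -/
theorem stacey_corner_transfer_operator
    {B : Type*} [CStarAlgebra B] [PartialOrder B] [StarOrderedRing B]
    (β : B →⋆ₐ[ℂ] B) (hinj : Function.Injective β)
    (hrange : Set.range β = {x : B | ∃ b : B, x = β 1 * b * β 1})
    (K : B → B) (hK : ∀ b : B, β (K b) = β 1 * b * β 1) :
    (∀ b c : B, K (b + c) = K b + K c) ∧
    (∀ (z : ℂ) (b : B), K (z • b) = z • K b) ∧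
    (∀ b : B, 0 ≤ b → 0 ≤ K b) ∧
    (∀ b : B, ‖K b‖ ≤ ‖b‖) ∧
    (∀ b c : B, K (β b * c) = b * K c) := by
  have hnorm : ∀ x : B, ‖β x‖ = ‖x‖ := fun x =>
    NonUnitalStarAlgHom.norm_map β hinj x
  have hone : ‖(1 : B)‖ ≤ 1 := by
    have h := CStarRing.norm_star_mul_self (x := (1 : B))
    simp only [star_one, one_mul] at h
    nlinarith [norm_nonneg (1 : B)]
  refine ⟨?_, ?_, ?_, ?_, ?_⟩
  · intro b c
    apply hinj
    rw [map_add, hK, hK, hK]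
    noncomm_ring
  · intro z b
    apply hinj
    rw [map_smul, hK, hK]
    rw [mul_smul_comm, smul_mul_assoc]
  · intro b hb
    -- `K b` is selfadjoint
    have hsa : IsSelfAdjoint (K b) := by
      apply hinj
      rw [map_star, hK]
      have h1 : star (β 1) = β 1 := by rw [← map_star, star_one]
      simp [star_mul, h1, (IsSelfAdjoint.of_nonneg hb).star_eq, mul_assoc]
    -- `β (K b)` is nonneg
    have hpos : 0 ≤ β (K b) := by
      rw [hK]
      have hb' : b = CFC.sqrt b * CFC.sqrt b := (CFC.sqrt_mul_sqrt_self b hb).symm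
      have hs : star (CFC.sqrt b) = CFC.sqrt b :=
        (IsSelfAdjoint.of_nonneg (CFC.sqrt_nonneg (a := b))).star_eq
      have h1 : star (β 1) = β 1 := by rw [← map_star, star_one]
      calc (0 : B) ≤ star (CFC.sqrt b * β 1) * (CFC.sqrt b * β 1) := star_mul_self_nonneg _
        _ = β 1 * b * β 1 := by
            rw [star_mul, hs, h1]
            rw [show β 1 * CFC.sqrt b * (CFC.sqrt b * β 1)
                = β 1 * (CFC.sqrt b * CFC.sqrt b) * β 1 by noncomm_ring, ← hb']
    -- transfer positivity back along the spectrum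
    rw [StarOrderedRing.nonneg_iff_spectrum_nonneg (R := ℝ) (K b) hsa]
    have hspec := hsa.map_spectrum_real β hinj
    intro x hx
    rw [← hspec] at hx
    exact spectrum_nonneg_of_nonneg hpos hx
  · intro b
    rw [← hnorm, hK]
    calc ‖β 1 * b * β 1‖ ≤ ‖β 1 * b‖ * ‖β 1‖ := norm_mul_le _ _
      _ ≤ ‖β 1‖ * ‖b‖ * ‖β 1‖ := by
          gcongr; exact norm_mul_le _ _
      _ ≤ 1 * ‖b‖ * 1 := by
          have : ‖β (1 : B)‖ ≤ 1 := by rw [hnorm]; exact hone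
          gcongr
      _ = ‖b‖ := by ring
  · intro b c
    apply hinj
    rw [hK, map_mul, hK]
    have h1 : β 1 * β b = β b := by rw [← map_mul, one_mul]
    have h2 : β b * β 1 = β b := by rw [← map_mul, mul_one]
    rw [show β 1 * (β b * c) * β 1 = (β 1 * β b) * (c * β 1) by noncomm_ring, h1,
        show β b * (β 1 * c * β 1) = (β b * β 1) * (c * β 1) by noncomm_ring, h2]
end

section
/- Let B be a unital C*-algebra and β : B → B an injective *-endomorphism with range β(1)Bβ(1), and let K(b) = β⁻¹(β(1)bβ(1)). If b lies in the closed ideal generated by β(B) and K(c* b* b c) = 0 for all c ∈ B, then b = 0. -/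
/-- For a unital C*-algebra `B` and an injective *-endomorphism `β`
with range the corner `β(1) B β(1)`, the canonical transfer operator
`K b = β⁻¹ (β 1 * b * β 1)` is almost faithful on the closed ideal generated by
`β(B)`: if `b` lies in that ideal and `K (c* b* b c) = 0` for all `c`, then `b = 0`. -/
theorem canonical_transfer_operator_almost_faithful
    {B : Type*} [CStarAlgebra B] [PartialOrder B] [StarOrderedRing B]
    (β : B →⋆ₐ[ℂ] B) (hinj : Function.Injective β)
    (hrange : Set.range β = {x : B | ∃ b : B, x = β 1 * b * β 1})
    (K : B → B) (hK : ∀ b : B, β (K b) = β 1 * b * β 1)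
    (b : B)
    (hb : b ∈ closure ((TwoSidedIdeal.span (Set.range β) : TwoSidedIdeal B) : Set B))
    (hzero : ∀ c : B, K (star c * (star b * (b * c))) = 0) :
    b = 0 := by
  -- Key fact: b * c * β 1 = 0 for all c.
  have hstar1 : star (β 1) = β 1 := by
    rw [← map_star]; simp
  have key : ∀ c : B, b * c * β 1 = 0 := by
    intro c
    have h1 : β (K (star c * (star b * (b * c)))) = 0 := by
      rw [hzero c, map_zero]
    rw [hK] at h1
    have h2 : star (b * c * β 1) * (b * c * β 1) = 0 := by
      rw [star_mul, star_mul, hstar1]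
      calc β 1 * (star c * star b) * (b * c * β 1)
          = β 1 * (star c * (star b * (b * c))) * β 1 := by noncomm_ring
        _ = 0 := h1
    exact (CStarRing.star_mul_self_eq_zero_iff _).mp h2
  -- The two-sided ideal J of elements x with b * (y * x * z) = 0 and b * (y * star x * z) = 0.
  set J : TwoSidedIdeal B := TwoSidedIdeal.mk'
    {x : B | (∀ y z : B, b * (y * x * z) = 0) ∧ (∀ y z : B, b * (y * star x * z) = 0)}
    (by constructor <;> intro y z <;> simp)
    (by
      rintro x₁ x₂ ⟨h1, h2⟩ ⟨h3, h4⟩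
      constructor <;> intro y z
      · have := h1 y z; have := h3 y z
        simp [mul_add, add_mul, *]
      · have := h2 y z; have := h4 y z
        simp [star_add, mul_add, add_mul, *])
    (by
      rintro x ⟨h1, h2⟩
      constructor <;> intro y z <;> simp [h1 y z, h2 y z])
    (by
      rintro w x ⟨h1, h2⟩
      constructor <;> intro y z
      · have := h1 (y * w) z; rwa [mul_assoc y w x] at this
      · have := h2 y (star w * z)
        rw [star_mul]
        calc b * (y * (star x * star w) * z) = b * (y * star x * (star w * z)) := by noncomm_ring
          _ = 0 := this)
    (by
      rintro x w ⟨h1, h2⟩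
      constructor <;> intro y z
      · have := h1 y (w * z)
        calc b * (y * (x * w) * z) = b * (y * x * (w * z)) := by noncomm_ring
          _ = 0 := this
      · have := h2 (y * star w) z
        rw [star_mul]
        calc b * (y * (star w * star x) * z) = b * (y * star w * star x * z) := by noncomm_ring
          _ = 0 := this)
  have hsub : Set.range β ⊆ (J : Set B) := by
    rintro _ ⟨a, rfl⟩
    have haux : ∀ a : B, ∀ y z : B, b * (y * β a * z) = 0 := by
      intro a y z
      have : β a = β 1 * β a := by rw [← map_mul, one_mul]
      calc b * (y * β a * z) = (b * y * β 1) * (β a * z) := by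
            conv_lhs => rw [this, show b * (y * (β 1 * β a) * z) = (b * y * β 1) * (β a * z) from by noncomm_ring]
        _ = 0 := by rw [key y, zero_mul]
    rw [SetLike.mem_coe, TwoSidedIdeal.mem_mk']
    refine ⟨haux a, ?_⟩
    intro y z
    rw [← map_star]
    exact haux (star a) y z
  have hspan : (TwoSidedIdeal.span (Set.range β) : TwoSidedIdeal B) ≤ J := by
    intro x hx
    exact TwoSidedIdeal.mem_span_iff.mp hx J hsub
  -- On the span, b * x = 0 and b * star x = 0; pass to closure by continuity.
  have hmul : ∀ x ∈ closure ((TwoSidedIdeal.span (Set.range β) : TwoSidedIdeal B) : Set B),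
      b * star x = 0 := by
    intro x hx
    have hcont : Continuous fun x : B => b * star x := by continuity
    have : ∀ x ∈ ((TwoSidedIdeal.span (Set.range β) : TwoSidedIdeal B) : Set B),
        b * star x = 0 := by
      intro x hx
      have hJ := hspan hx
      rw [TwoSidedIdeal.mem_mk'] at hJ
      have := hJ.2 1 1
      simpa using this
    have hset : closure ((TwoSidedIdeal.span (Set.range β) : TwoSidedIdeal B) : Set B) ⊆
        {x : B | b * star x = 0} := by
      apply closure_minimal this
      exact isClosed_eq hcont continuous_const
    exact hset hx
  have hbb : b * star b = 0 := hmul b hb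
  have hnorm : ‖b‖ * ‖b‖ = 0 := by
    rw [← CStarRing.norm_self_mul_star, hbb, norm_zero]
  have : ‖b‖ = 0 := by nlinarith [norm_nonneg b]
  exact norm_eq_zero.mp this
end

section
/- Let (A, α, L) be an Exel system with A unital and L(1) = 1, and let M_L be the associated right Hilbert A-module with inner product ⟨q(a), q(b)⟩ = L(a* b), right action q(a)·b = q(a α(b)), and q : A → M_L the canonical map with dense range. Then the map U : A → M_L determined by U(a) = q(α(a)) is an inner-product-preserving (isometric) adjointable map whose adjoint satisfies U*(q(a)) = L(a) for all a ∈ A; in particular ⟨U(a), U(b)⟩ = a* b and ‖L(b)‖ ≤ ‖q(b)‖ for all b ∈ A. -/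
open scoped RightActions

/-- The December 2024 Mathlib `CStarModule` (right `A`-module via `Aᵐᵒᵖ`), whose meaning
the current Mathlib class no longer has (it is now a left module). -/
class CStarModuleRight (A E : Type*) [NonUnitalSemiring A] [StarRing A] [Module ℂ A]
    [AddCommGroup E] [Module ℂ E] [PartialOrder A] [SMul Aᵐᵒᵖ E] [Norm A] [Norm E]
    extends Inner A E where
  inner_add_right {x} {y} {z} : inner x (y + z) = inner x y + inner x z
  inner_self_nonneg {x} : 0 ≤ inner x x
  inner_self {x} : inner x x = 0 ↔ x = 0
  inner_op_smul_right {a : A} {x y : E} : inner x (y <• a) = inner x y * a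
  inner_smul_right_complex {z : ℂ} {x} {y} : inner x (z • y) = z • inner x y
  star_inner x y : star (inner x y) = inner y x
  norm_eq_sqrt_norm_inner_self x : ‖x‖ = Real.sqrt ‖inner x x‖

/-!
`U a = q (α a) = q 1 <• a`, so `⟪U a, m⟫ = star a * ⟪q 1, m⟫`: the adjoint of `U` is
`T = ⟪q 1, ·⟫`, with `T (q a) = L (star 1 * a) = L a`, and `⟪U a, U b⟫ = star a * L 1 * b`. Since `‖q 1‖ ^ 2 = ‖L 1‖ ≤ 1`,
Cauchy–Schwarz gives `‖L b‖ = ‖⟪q 1, q b⟫‖ ≤ ‖q b‖`.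
-/

lemma CStarRing.norm_one_le {E : Type*} [NormedRing E] [StarRing E] [CStarRing E] :
    ‖(1 : E)‖ ≤ 1 := by
  rcases subsingleton_or_nontrivial E with _ | _
  · simp [Subsingleton.elim (1 : E) 0]
  · exact CStarRing.norm_one.le

namespace CStarModuleRight

open MulOpposite

section Module

variable {A E : Type*} [NonUnitalCStarAlgebra A] [PartialOrder A]
  [AddCommGroup E] [Module ℂ E] [Norm E] [SMul Aᵐᵒᵖ E] [CStarModuleRight A E]

/-- Makes Mathlib's theory of (left) Hilbert C⋆-modules, notably Cauchy–Schwarz, available for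
right Hilbert modules. -/
abbrev toCStarModuleMulOpposite : CStarModule Aᵐᵒᵖ E where
  inner x y := op (inner A x y)
  inner_add_right := congrArg op (CStarModuleRight.inner_add_right (A := A))
  inner_self_nonneg := op_nonneg.mpr (CStarModuleRight.inner_self_nonneg (A := A))
  inner_self := (op_eq_zero_iff _).trans (CStarModuleRight.inner_self (A := A))
  inner_op_smul_right {a _ _} := congrArg op (CStarModuleRight.inner_op_smul_right (a := unop a))
  inner_smul_right_complex := congrArg op (CStarModuleRight.inner_smul_right_complex (A := A))
  star_inner x y := congrArg op (CStarModuleRight.star_inner x y)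
  norm_eq_sqrt_norm_inner_self := CStarModuleRight.norm_eq_sqrt_norm_inner_self (A := A)

attribute [local instance] toCStarModuleMulOpposite

lemma inner_op_smul_left (a : A) (x y : E) : inner A (x <• a) y = star a * inner A x y :=
  congrArg unop (CStarModule.inner_op_smul_left (A := Aᵐᵒᵖ) (a := op a) (x := x) (y := y))

lemma norm_inner_le [StarOrderedRing A] (x y : E) : ‖inner A x y‖ ≤ ‖x‖ * ‖y‖ :=
  CStarModule.norm_inner_le E (A := Aᵐᵒᵖ)

end Module

section Normed

variable {A E : Type*} [NonUnitalCStarAlgebra A] [PartialOrder A] [StarOrderedRing A]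
  [NormedAddCommGroup E] [NormedSpace ℂ E] [SMul Aᵐᵒᵖ E] [CStarModuleRight A E]

attribute [local instance] toCStarModuleMulOpposite

noncomputable def innerSL (x : E) : E →L[ℂ] A :=
  (opContinuousLinearEquiv ℂ).symm.toContinuousLinearMap ∘L CStarModule.innerSL (A := Aᵐᵒᵖ) x

lemma innerSL_apply (x y : E) : innerSL x y = inner A x y := rfl

end Normed

end CStarModuleRight

theorem exel_module_isometry_adjointable_general
    {A M : Type*} [CStarAlgebra A] [PartialOrder A] [StarOrderedRing A]
    [NormedAddCommGroup M] [NormedSpace ℂ M]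
    [SMul Aᵐᵒᵖ M] [CStarModuleRight A M]
    (α : A →⋆ₐ[ℂ] A) (L : A →ₗ[ℂ] A)
    (hunital : L 1 = 1)
    (q : A →ₗ[ℂ] M)
    (hq_inner : ∀ a b : A, (inner A (q a) (q b) : A) = L (star a * b))
    (hq_smul : ∀ a b : A, (q a : M) <• b = q (a * α b)) :
    (∀ a b : A, (inner A (q (α a)) (q (α b)) : A) = star a * b) ∧
    (∀ b : A, ‖L b‖ ≤ ‖q b‖) ∧
    (∃ T : M →L[ℂ] A,
      (∀ a : A, T (q a) = L a) ∧
      (∀ (a : A) (m : M), (inner A (q (α a)) m : A) = star a * T m)) := by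
  have hqα (a : A) : q (α a) = q 1 <• a := by rw [hq_smul, one_mul]
  have hL (b : A) : inner A (q 1) (q b) = L b := by rw [hq_inner, star_one, one_mul]
  have hq1 : ‖q 1‖ ≤ 1 := by
    rw [CStarModuleRight.norm_eq_sqrt_norm_inner_self (A := A), hL, hunital]
    exact Real.sqrt_le_one.mpr CStarRing.norm_one_le
  refine ⟨fun a b => ?_, fun b => ?_, CStarModuleRight.innerSL (q 1),
    fun a => (CStarModuleRight.innerSL_apply _ _).trans (hL a), fun a m => ?_⟩
  · rw [hqα, hqα, CStarModuleRight.inner_op_smul_left, CStarModuleRight.inner_op_smul_right,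
      hL, hunital, one_mul]
  · rw [← hL]
    exact (CStarModuleRight.norm_inner_le _ _).trans (mul_le_of_le_one_left (norm_nonneg _) hq1)
  · rw [hqα, CStarModuleRight.inner_op_smul_left, CStarModuleRight.innerSL_apply]

/-- Let `(A, α, L)` be an Exel system with `A` unital and `L 1 = 1`,
and let `M` be the associated right Hilbert `A`-module `M_L`, with canonical dense-range
map `q : A → M` satisfying `⟪q a, q b⟫ = L (star a * b)` and `q a <• b = q (a * α b)`.
Then `U : a ↦ q (α a)` is inner-product preserving, it is adjointable with adjoint `T`
satisfying `T (q a) = L a`; in particular `⟪U a, U b⟫ = star a * b` and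
`‖L b‖ ≤ ‖q b‖` for all `a b ∈ A`. -/
theorem exel_module_isometry_adjointable
    {A M : Type*} [CStarAlgebra A] [PartialOrder A] [StarOrderedRing A]
    [NormedAddCommGroup M] [NormedSpace ℂ M] [CompleteSpace M]
    [SMul Aᵐᵒᵖ M] [CStarModuleRight A M]
    (α : A →⋆ₐ[ℂ] A) (L : A →ₗ[ℂ] A)
    (hpos : ∀ a : A, 0 ≤ a → 0 ≤ L a)
    (htrans : ∀ a b : A, L (α a * b) = a * L b)
    (hunital : L 1 = 1)
    (q : A →ₗ[ℂ] M) (hdense : DenseRange q)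
    (hq_inner : ∀ a b : A, (inner A (q a) (q b) : A) = L (star a * b))
    (hq_smul : ∀ a b : A, (q a : M) <• b = q (a * α b)) :
    (∀ a b : A, (inner A (q (α a)) (q (α b)) : A) = star a * b) ∧
    (∀ b : A, ‖L b‖ ≤ ‖q b‖) ∧
    (∃ T : M →L[ℂ] A,
      (∀ a : A, T (q a) = L a) ∧
      (∀ (a : A) (m : M), (inner A (q (α a)) m : A) = star a * T m)) :=
  exel_module_isometry_adjointable_general α L hunital q hq_inner hq_smul
end

section
/- There exists a continuous function m₀ : 𝕋 → ℝ on the unit circle and a neighbourhood U of 1 in 𝕋 such that m₀ is identically √2 on U and |m₀(w)|² + |m₀(-w)|² = 2 for every w ∈ 𝕋 (a quadrature mirror filter). -/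
lemma clamp_neg (t : ℝ) : max (-1) (min 1 (-t)) = - max (-1) (min 1 t) := by
  rcases le_total t (-1) with h | h
  · rw [min_eq_left (by linarith : (1:ℝ) ≤ -t), max_eq_right (by norm_num : (-1:ℝ) ≤ 1),
      min_eq_right (by linarith : t ≤ 1), max_eq_left (by linarith)]
    norm_num
  rcases le_total 1 t with h' | h'
  · rw [min_eq_right (by linarith : -t ≤ 1), max_eq_left (by linarith),
      min_eq_left h', max_eq_right (by norm_num : (-1:ℝ) ≤ 1)]
  · rw [min_eq_right (by linarith : -t ≤ 1), max_eq_right (by linarith),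
      min_eq_right h', max_eq_right h]

/-- There is a continuous real-valued function `m₀` on the unit circle
`𝕋 = {z : ℂ | ‖z‖ = 1}` and a neighbourhood `U` of `1` in `𝕋` such that `m₀` is
identically `√2` on `U` and `m₀ w ^ 2 + m₀ (-w) ^ 2 = 2` for every `w ∈ 𝕋`
(a quadrature mirror filter). -/
theorem exists_quadrature_mirror_filter :
    ∃ (m₀ : ℂ → ℝ) (U : Set ℂ),
      ContinuousOn m₀ (Metric.sphere (0 : ℂ) 1) ∧
      U ∈ nhdsWithin (1 : ℂ) (Metric.sphere (0 : ℂ) 1) ∧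
      (∀ z ∈ U, m₀ z = Real.sqrt 2) ∧
      (∀ w ∈ Metric.sphere (0 : ℂ) 1, m₀ w ^ 2 + m₀ (-w) ^ 2 = 2) := by
  refine ⟨fun z => Real.sqrt (1 + max (-1) (min 1 (2 * z.re))),
    {z : ℂ | 1/2 < z.re}, ?_, ?_, ?_, ?_⟩
  · exact (Real.continuous_sqrt.comp (continuous_const.add
      (continuous_const.max (continuous_const.min
        (continuous_const.mul Complex.continuous_re))))).continuousOn
  · apply mem_nhdsWithin_of_mem_nhds
    exact (isOpen_lt continuous_const Complex.continuous_re).mem_nhds (by norm_num)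
  · intro z hz
    have h : (1 : ℝ) < 2 * z.re := by
      have : (1/2 : ℝ) < z.re := hz
      linarith
    show Real.sqrt (1 + max (-1) (min 1 (2 * z.re))) = Real.sqrt 2
    rw [min_eq_left h.le, max_eq_right (by norm_num : (-1:ℝ) ≤ 1)]
    norm_num
  · intro w _
    show Real.sqrt (1 + max (-1) (min 1 (2 * w.re))) ^ 2
      + Real.sqrt (1 + max (-1) (min 1 (2 * (-w).re))) ^ 2 = 2
    have h1 : (-1 : ℝ) ≤ max (-1) (min 1 (2 * w.re)) := le_max_left _ _
    have h2 : max (-1) (min 1 (2 * w.re)) ≤ 1 :=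
      max_le (by norm_num) (min_le_left _ _)
    have key : max (-1) (min 1 (2 * (-w).re)) = - max (-1) (min 1 (2 * w.re)) := by
      rw [Complex.neg_re, mul_neg, clamp_neg]
    rw [key, Real.sq_sqrt (by linarith), Real.sq_sqrt (by linarith)]
    ring
end
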